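/- arXiv:2502.04117 — 4 statements merged into one kernel-verified Lean document; each statement's English description precedes it below -/
import Mathlib

section
/- Let G=(V,E) be a connected graph and let P_p be site Bernoulli percolation with parameter p on G (each vertex independently open with probability p). For X ∼ P_p, a vertex i, let C_i(X) be the open cluster of i (empty if i is closed), and for A ⊂ V let C_A(X) = ∪_{i∈A} C_i(X). Then for any λ ≥ 0 and any A ⊂ V, E_p[exp(λ|C_A(X)|)] ≤ ∏_{i∈A} E_p[exp(λ|C_i(X)|)]. -/
/-!
Peel off one vertex `i` of `A` at a time. Whether `C_i = S` is decided by the sites of `S`, its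
outer boundary and `i`. On that event, every cluster of a vertex of `A` that is not `C_i` avoids
these sites, so it is still a cluster once they are all closed. The configuration with those sites
closed depends only on the other sites, hence is independent of the event `C_i = S`, and it is
dominated by `X`. Since `|C_{A ∪ {i}}| ≤ |S| + |C_A(closed)|`, summing over `S` gives
`E[exp(λ|C_{A ∪ {i}}|)] ≤ E[exp(λ|C_i|)] · E[exp(λ|C_A|)]`.
-/

open MeasureTheory
open scoped ENNReal

noncomputable section

/-- The subgraph of open sites: `i ∼ j` iff they are adjacent in `G` and both open in `X`. -/
def openSubgraph {V : Type*} (G : SimpleGraph V) (X : V → Bool) : SimpleGraph V where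
  Adj i j := G.Adj i j ∧ X i = true ∧ X j = true
  symm := ⟨fun i j h => ⟨h.1.symm, h.2.2, h.2.1⟩⟩
  loopless := ⟨fun i h => G.loopless.irrefl i h.1⟩

/-- The open cluster of the vertex `i` (empty if `i` is closed). -/
def percCluster {V : Type*} (G : SimpleGraph V) (X : V → Bool) (i : V) : Set V :=
  {j | X i = true ∧ (openSubgraph G X).Reachable i j}

/-- `C_A(X) = ⋃_{i ∈ A} C_i(X)`. -/
def percClusterSet {V : Type*} (G : SimpleGraph V) (X : V → Bool) (A : Set V) : Set V :=
  ⋃ i ∈ A, percCluster G X i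

/-- Site Bernoulli percolation with parameter `p`: the product of Bernoulli(p)
measures on configurations `V → Bool`. -/
def bernoulliProduct (V : Type*) [Fintype V] (p : ℝ≥0∞) (hp : p ≤ 1) :
    Measure (V → Bool) :=
  Measure.pi fun _ => (PMF.ofFintype (fun b => cond b p (1 - p))
    (by rw [Fintype.sum_bool]; exact add_tsub_cancel_of_le hp)).toMeasure

open ProbabilityTheory Real

section Independence

variable {ι : Type*} [Fintype ι] {Ω : ι → Type*} [∀ i, MeasurableSpace (Ω i)]
  {μ : ∀ i, Measure (Ω i)} [∀ i, IsProbabilityMeasure (μ i)]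

theorem indepFun_pi_of_dependsOn_disjoint {β γ : Type*} [MeasurableSpace β] [MeasurableSpace γ]
    {f : (∀ i, Ω i) → β} {g : (∀ i, Ω i) → γ} {s t : Set ι} (hst : Disjoint s t)
    (hf : DependsOn f s) (hg : DependsOn g t) (mf : Measurable f) (mg : Measurable g) :
    IndepFun f g (Measure.pi μ) := by
  classical
  obtain ⟨x₀⟩ : Nonempty (∀ i, Ω i) := ⟨fun i => (nonempty_of_isProbabilityMeasure (μ i)).some⟩
  have hcoord := (iIndepFun_pi (μ := μ) (X := fun _ => id) fun _ => aemeasurable_id).indepFun_finset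
    s.toFinset t.toFinset (by simpa using hst) fun i => measurable_pi_apply i
  convert hcoord.comp (mf.comp (measurable_updateFinset (x := x₀)))
    (mg.comp (measurable_updateFinset (x := x₀))) using 1
  · exact funext fun x => hf fun i hi => by simp [Function.updateFinset, hi]
  · exact funext fun x => hg fun i hi => by simp [Function.updateFinset, hi]

end Independence

section Cluster

variable {V : Type*} {G : SimpleGraph V} {X Y : V → Bool} {i j u v : V}

theorem percCluster_subset_of_closed {S : Set V} (hi : X i = true → i ∈ S)
    (hS : ∀ a ∈ S, ∀ b, (openSubgraph G X).Adj a b → b ∈ S) : percCluster G X i ⊆ S := by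
  rintro v ⟨hXi, hr⟩
  rw [SimpleGraph.reachable_iff_reflTransGen] at hr
  induction hr with
  | refl => exact hi hXi
  | tail _ hab ih => exact hS _ ih _ hab

theorem open_of_mem_percCluster (h : j ∈ percCluster G X i) : X j = true :=
  percCluster_subset_of_closed (S := {v | X v = true}) id (fun _ _ _ hab => hab.2.2) h

theorem self_mem_percCluster (hi : X i = true) : i ∈ percCluster G X i := ⟨hi, .refl i⟩

theorem mem_percCluster_of_adj (hu : u ∈ percCluster G X i) (huv : G.Adj u v) (hv : X v = true) :
    v ∈ percCluster G X i :=
  ⟨hu.1, hu.2.trans (SimpleGraph.Adj.reachable ⟨huv, open_of_mem_percCluster hu, hv⟩)⟩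

theorem percCluster_subset_of_mem (hi : v ∈ percCluster G X i) (hj : v ∈ percCluster G X j) :
    percCluster G X j ⊆ percCluster G X i :=
  fun _ hu => ⟨hi.1, hi.2.trans (hj.2.symm.trans hu.2)⟩

theorem percCluster_subset_percCluster (h : ∀ v ∈ percCluster G X j, Y v = true) :
    percCluster G X j ⊆ percCluster G Y j := by
  refine fun v hv => (percCluster_subset_of_closed (S := percCluster G X j ∩ percCluster G Y j)
    (fun hj => ?_) ?_ hv).2
  · have hjX : j ∈ percCluster G X j := self_mem_percCluster hj
    exact ⟨hjX, self_mem_percCluster (h j hjX)⟩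
  · rintro a ⟨haX, haY⟩ b hab
    have hbX := mem_percCluster_of_adj haX hab.1 hab.2.2
    exact ⟨hbX, mem_percCluster_of_adj haY hab.1 (h b hbX)⟩

theorem percCluster_mono (h : X ≤ Y) (i : V) : percCluster G X i ⊆ percCluster G Y i :=
  percCluster_subset_percCluster fun v hv => Bool.le_iff_imp.1 (h v) (open_of_mem_percCluster hv)

theorem percClusterSet_mono (h : X ≤ Y) (A : Set V) :
    percClusterSet G X A ⊆ percClusterSet G Y A :=
  Set.biUnion_mono subset_rfl fun i _ => percCluster_mono h i

/-- The sites whose states decide the event `C_i = S`: `i` itself (for `S = ∅`), `S`, and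
the outer boundary of `S`. -/
def clusterNbhd (G : SimpleGraph V) (i : V) (S : Set V) : Set V :=
  {v | v = i ∨ v ∈ S ∨ ∃ s ∈ S, G.Adj s v}

theorem percCluster_eq_of_eqOn {S : Set V} (hXY : ∀ v ∈ clusterNbhd G i S, X v = Y v)
    (h : percCluster G X i = S) : percCluster G Y i = S := by
  subst h
  refine subset_antisymm (percCluster_subset_of_closed (fun hi => ?_) ?_) ?_
  · exact self_mem_percCluster ((hXY i (Or.inl rfl)).trans hi)
  · rintro a ha b ⟨hab, -, hb⟩
    exact mem_percCluster_of_adj ha hab ((hXY b (Or.inr (Or.inr ⟨a, ha, hab⟩))).trans hb)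
  · exact percCluster_subset_percCluster fun v hv =>
      (hXY v (Or.inr (Or.inl hv))).symm.trans (open_of_mem_percCluster hv)

theorem dependsOn_percCluster_eq (i : V) (S : Set V) :
    DependsOn (fun X => percCluster G X i = S) (clusterNbhd G i S) := fun _ _ hXY =>
  propext ⟨percCluster_eq_of_eqOn hXY, percCluster_eq_of_eqOn fun v hv => (hXY v hv).symm⟩

open Classical in
def closeOn (B : Set V) (X : V → Bool) : V → Bool :=
  fun v => X v && !decide (v ∈ B)

theorem closeOn_le (B : Set V) (X : V → Bool) : closeOn B X ≤ X :=
  fun _ => Bool.and_le_left _ _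

theorem closeOn_of_notMem {B : Set V} (hv : v ∉ B) : closeOn B X v = X v := by
  simp [closeOn, hv]

theorem dependsOn_closeOn (B : Set V) : DependsOn (closeOn B) Bᶜ :=
  fun _ _ hXY => funext fun v => by
    by_cases hv : v ∈ B
    · simp [closeOn, hv]
    · rw [closeOn_of_notMem hv, closeOn_of_notMem hv, hXY v hv]

/-- A cluster that meets `clusterNbhd G i (C_i)` meets `C_i`, hence is `C_i`; all other clusters
survive closing `clusterNbhd G i (C_i)`. -/
theorem percClusterSet_insert_subset (A : Set V) :
    percClusterSet G X (insert i A) ⊆ percCluster G X i ∪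
      percClusterSet G (closeOn (clusterNbhd G i (percCluster G X i)) X) A := by
  simp only [percClusterSet, Set.biUnion_insert]
  rintro u (hu | hu)
  · exact Or.inl hu
  by_cases huS : u ∈ percCluster G X i
  · exact Or.inl huS
  right
  simp only [Set.mem_iUnion₂] at hu ⊢
  obtain ⟨j, hjA, hu⟩ := hu
  refine ⟨j, hjA, percCluster_subset_percCluster (fun v hv => ?_) hu⟩
  have hvB : v ∉ clusterNbhd G i (percCluster G X i) := by
    intro hvB
    have hvi : v ∈ percCluster G X i := by
      rcases hvB with rfl | hvS | ⟨s, hs, hsv⟩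
      · exact self_mem_percCluster (open_of_mem_percCluster hv)
      · exact hvS
      · exact mem_percCluster_of_adj hs hsv (open_of_mem_percCluster hv)
    exact huS (percCluster_subset_of_mem hvi hv hu)
  rw [closeOn_of_notMem hvB]
  exact open_of_mem_percCluster hv

end Cluster

section Percolation

variable {V : Type*} [Fintype V] {G : SimpleGraph V} {p : ℝ≥0∞}

instance (hp : p ≤ 1) : IsProbabilityMeasure (bernoulliProduct V p hp) := by
  unfold bernoulliProduct
  infer_instance

theorem integral_exp_percClusterSet_insert_le (hp : p ≤ 1) {lam : ℝ} (hlam : 0 ≤ lam) (i : V)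
    (A : Set V) :
    ∫ X, exp (lam * (percClusterSet G X (insert i A)).ncard) ∂bernoulliProduct V p hp ≤
      (∫ X, exp (lam * (percCluster G X i).ncard) ∂bernoulliProduct V p hp) *
        ∫ X, exp (lam * (percClusterSet G X A).ncard) ∂bernoulliProduct V p hp := by
  classical
  set μ := bernoulliProduct V p hp
  set F : (V → Bool) → ℝ := fun X => exp (lam * (percClusterSet G X A).ncard)
  set g : Set V → (V → Bool) → ℝ := fun S X =>
    if percCluster G X i = S then exp (lam * S.ncard) else 0
  have hg_sum (X : V → Bool) : ∑ S, g S X = exp (lam * (percCluster G X i).ncard) := by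
    simp [g]
  have hg_nonneg (S : Set V) (X : V → Bool) : 0 ≤ g S X := by
    simp only [g]; split_ifs <;> positivity
  have hbound (X : V → Bool) : exp (lam * (percClusterSet G X (insert i A)).ncard) ≤
      ∑ S, g S X * F (closeOn (clusterNbhd G i S) X) := by
    simp only [g, F, ite_mul, zero_mul, Finset.sum_ite_eq, Finset.mem_univ, if_true]
    rw [← exp_add, ← mul_add]
    gcongr
    exact_mod_cast (Set.ncard_le_ncard (percClusterSet_insert_subset A) (Set.toFinite _)).trans
      (Set.ncard_union_le _ _)
  have hindep (S : Set V) : ∫ X, g S X * F (closeOn (clusterNbhd G i S) X) ∂μ =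
      (∫ X, g S X ∂μ) * ∫ X, F (closeOn (clusterNbhd G i S) X) ∂μ :=
    (indepFun_pi_of_dependsOn_disjoint disjoint_compl_right
      (fun X Y hXY => by simp only [g, dependsOn_percCluster_eq i S hXY])
      (fun X Y hXY => congrArg F (dependsOn_closeOn _ hXY)) .of_discrete .of_discrete
      ).integral_mul_eq_mul_integral .of_discrete .of_discrete
  have hclose (S : Set V) : ∫ X, F (closeOn (clusterNbhd G i S) X) ∂μ ≤ ∫ X, F X ∂μ :=
    integral_mono .of_finite .of_finite fun X => by
      simp only [F]
      gcongr 3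
      exact Set.ncard_le_ncard (percClusterSet_mono (closeOn_le _ X) A) (Set.toFinite _)
  calc ∫ X, exp (lam * (percClusterSet G X (insert i A)).ncard) ∂μ
      ≤ ∫ X, ∑ S, g S X * F (closeOn (clusterNbhd G i S) X) ∂μ :=
        integral_mono .of_finite .of_finite hbound
    _ = ∑ S, (∫ X, g S X ∂μ) * ∫ X, F (closeOn (clusterNbhd G i S) X) ∂μ := by
        rw [integral_finsetSum _ fun _ _ => .of_finite]
        exact Finset.sum_congr rfl fun S _ => hindep S
    _ ≤ ∑ S, (∫ X, g S X ∂μ) * ∫ X, F X ∂μ :=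
        Finset.sum_le_sum fun S _ =>
          mul_le_mul_of_nonneg_left (hclose S) (integral_nonneg (hg_nonneg S))
    _ = (∫ X, exp (lam * (percCluster G X i).ncard) ∂μ) * ∫ X, F X ∂μ := by
        rw [← Finset.sum_mul, ← integral_finsetSum _ fun _ _ => .of_finite]
        simp_rw [hg_sum]

end Percolation

theorem stmt1_general {V : Type*} [Fintype V] (G : SimpleGraph V)
    (p : ℝ≥0∞) (hp : p ≤ 1) (lam : ℝ) (hlam : 0 ≤ lam) (A : Finset V) :
    ∫ X, Real.exp (lam * (percClusterSet G X (A : Set V)).ncard)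
        ∂(bernoulliProduct V p hp)
      ≤ ∏ i ∈ A,
          ∫ X, Real.exp (lam * (percCluster G X i).ncard) ∂(bernoulliProduct V p hp) := by
  classical
  induction A using Finset.induction_on with
  | empty => simp [percClusterSet]
  | insert i A hi ih =>
    rw [Finset.prod_insert hi, Finset.coe_insert]
    exact (integral_exp_percClusterSet_insert_le hp hlam i A).trans
      (mul_le_mul_of_nonneg_left ih (integral_nonneg fun _ => (exp_pos _).le))

/-- **Exponential moments of cluster sizes factorize over the starting set.**
For site Bernoulli percolation on a connected graph `G`, any `λ ≥ 0` and any `A ⊆ V`,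
`E_p[exp(λ |C_A|)] ≤ ∏_{i ∈ A} E_p[exp(λ |C_i|)]`. -/
theorem stmt1 {V : Type*} [Fintype V] (G : SimpleGraph V) (hG : G.Connected)
    (p : ℝ≥0∞) (hp : p ≤ 1) (lam : ℝ) (hlam : 0 ≤ lam) (A : Finset V) :
    ∫ X, Real.exp (lam * (percClusterSet G X (A : Set V)).ncard)
        ∂(bernoulliProduct V p hp)
      ≤ ∏ i ∈ A,
          ∫ X, Real.exp (lam * (percCluster G X i).ncard) ∂(bernoulliProduct V p hp) :=
  stmt1_general G p hp lam hlam A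
end
end

section
/- Let Ω_1, Ω_2 be finite sets, Ω = Ω_1 × Ω_2, and let μ, ν be probability measures on Ω with marginals μ_i = μ∘π_i^{-1}, ν_i = ν∘π_i^{-1}. Let ε_1, ε_2, ε_3 ∈ [0,1). Suppose: (1) for every ξ, ξ' ∈ Ω_1 with positive first-marginal probability and every A ⊂ Ω_2, and for ρ ∈ {μ,ν}, |ρ(Ω_1×A | {ξ}×Ω_2) − ρ(Ω_1×A | {ξ'}×Ω_2)| ≤ ε_1; (2) the total variation distance between μ_2 and ν_2 is at most ε_2; (3) there is D ⊂ Ω_2 with μ_2(D) ≥ 1−ε_3 and ν_2(D) ≥ 1−ε_3 such that for every y ∈ D and x ∈ Ω_1, μ(x,y)/μ_2(y) = ν(x,y)/ν_2(y). Then, setting ε = max(ε_1, √ε_2, ε_3), if ε ≤ 0.1, for any x ∈ Ω_1 with ν_1(x) > 0 one has 1 − 9ε ≤ μ_1(x)/ν_1(x) ≤ 1/(1 − 9ε). -/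
/-!
On the event `D` the conditional laws agree, so `μ(x, y) = ν(x | y) μ₂(y) ≥ (1 - ε) ν(x, y)` for
every `y ∈ D` outside the bad set `B = {y : μ₂(y) < (1 - ε) ν₂(y)}`. Markov's inequality and the
total variation bound give `ν₂(B) ≤ 2ε`, so `G = D \ B` has `ν₂(G) ≥ 1 - 3ε`, and mixing carries
this over to the conditional law given `x`: `ν(x, G) ≥ (ν₂(G) - ε) ν₁(x)`. Altogether
`μ₁(x) ≥ (1 - ε)(1 - 4ε) ν₁(x) ≥ (1 - 5ε) ν₁(x)`; exchanging `μ` and `ν` gives the upper bound.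
-/

open Finset

namespace ProductWeights

def fst {Ω₁ Ω₂ : Type*} [Fintype Ω₂] (ρ : Ω₁ × Ω₂ → ℝ) (x : Ω₁) : ℝ := ∑ y, ρ (x, y)

def snd {Ω₁ Ω₂ : Type*} [Fintype Ω₁] (ρ : Ω₁ × Ω₂ → ℝ) (y : Ω₂) : ℝ := ∑ x, ρ (x, y)

def IsMixing {Ω₁ Ω₂ : Type*} [Fintype Ω₂] (ρ : Ω₁ × Ω₂ → ℝ) (ε : ℝ) : Prop :=
  ∀ ξ ξ', 0 < fst ρ ξ → 0 < fst ρ ξ' → ∀ A : Finset Ω₂,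
    |(∑ y ∈ A, ρ (ξ, y)) / fst ρ ξ - (∑ y ∈ A, ρ (ξ', y)) / fst ρ ξ'| ≤ ε

/-- The strict inequality defining the summation range is what makes the case `ε = 0` work. -/
lemma sum_filter_lt_sub_le {ι : Type*} [Fintype ι] {f g : ι → ℝ} {ε η : ℝ}
    (hε : 0 ≤ ε) (hη : 0 ≤ η) (h : ∑ i, |g i - f i| ≤ ε * η) :
    ∑ i with ε * g i < g i - f i, g i ≤ η := by
  rcases (univ.filter fun i => ε * g i < g i - f i).eq_empty_or_nonempty with hB | hB
  · rwa [hB, sum_empty]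
  · refine (lt_of_mul_lt_mul_left ?_ hε).le
    calc ε * ∑ i with ε * g i < g i - f i, g i
        = ∑ i with ε * g i < g i - f i, ε * g i := mul_sum _ _ _
      _ < ∑ i with ε * g i < g i - f i, (g i - f i) :=
          sum_lt_sum_of_nonempty hB fun i hi => (mem_filter.mp hi).2
      _ ≤ ∑ i with ε * g i < g i - f i, |g i - f i| := sum_le_sum fun i _ => le_abs_self _
      _ ≤ ∑ i, |g i - f i| := sum_le_univ_sum_of_nonneg fun i => abs_nonneg _
      _ ≤ ε * η := h

lemma mul_le_of_div_eq_div {a b c d ε : ℝ} (ha : 0 ≤ a) (hb : 0 ≤ b) (hc : 0 ≤ c)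
    (hcd : c ≤ d) (h : a / b = c / d) (hbd : (1 - ε) * d ≤ b) : (1 - ε) * c ≤ a := by
  rcases (hc.trans hcd).eq_or_lt with rfl | hd
  · rw [le_antisymm hcd hc, mul_zero]
    exact ha
  rcases hb.eq_or_lt with rfl | hb
  · rw [div_zero, eq_comm, div_eq_zero_iff] at h
    rcases h with rfl | rfl
    · rw [mul_zero]
      exact ha
    · exact (lt_irrefl 0 hd).elim
  rw [div_eq_div_iff hb.ne' hd.ne'] at h
  nlinarith

lemma sum_le_fst {Ω₁ Ω₂ : Type*} [Fintype Ω₂] {ρ : Ω₁ × Ω₂ → ℝ} (hρ : ∀ z, 0 ≤ ρ z)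
    (x : Ω₁) (A : Finset Ω₂) : ∑ y ∈ A, ρ (x, y) ≤ fst ρ x :=
  sum_le_univ_sum_of_nonneg fun y => hρ (x, y)

lemma le_snd {Ω₁ Ω₂ : Type*} [Fintype Ω₁] {ρ : Ω₁ × Ω₂ → ℝ} (hρ : ∀ z, 0 ≤ ρ z)
    (x : Ω₁) (y : Ω₂) : ρ (x, y) ≤ snd ρ y :=
  single_le_sum (f := fun x => ρ (x, y)) (fun x _ => hρ (x, y)) (mem_univ x)

lemma snd_nonneg {Ω₁ Ω₂ : Type*} [Fintype Ω₁] {ρ : Ω₁ × Ω₂ → ℝ} (hρ : ∀ z, 0 ≤ ρ z)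
    (y : Ω₂) : 0 ≤ snd ρ y :=
  sum_nonneg fun x _ => hρ (x, y)

lemma IsMixing.sum_le_fst_mul {Ω₁ Ω₂ : Type*} [Fintype Ω₂] {ρ : Ω₁ × Ω₂ → ℝ} {ε : ℝ}
    (hρ : ∀ z, 0 ≤ ρ z) (h : IsMixing ρ ε) {x : Ω₁} (hx : 0 < fst ρ x) (A : Finset Ω₂)
    (ξ : Ω₁) : ∑ y ∈ A, ρ (ξ, y) ≤ fst ρ ξ * ((∑ y ∈ A, ρ (x, y)) / fst ρ x + ε) := by
  rcases (show 0 ≤ fst ρ ξ from sum_nonneg fun y _ => hρ (ξ, y)).eq_or_lt with hξ | hξ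
  · rw [← hξ, zero_mul]
    exact hξ ▸ sum_le_fst hρ ξ A
  · rw [← div_le_iff₀' hξ]
    linarith [(abs_le.mp (h ξ x hξ hx A)).2]

section

variable {Ω₁ Ω₂ : Type*} [Fintype Ω₁] [Fintype Ω₂]

lemma sum_fst (ρ : Ω₁ × Ω₂ → ℝ) : ∑ x, fst ρ x = ∑ z, ρ z :=
  (Fintype.sum_prod_type ρ).symm

lemma IsMixing.sub_mul_fst_le {ρ : Ω₁ × Ω₂ → ℝ} {ε : ℝ} (hρ : ∀ z, 0 ≤ ρ z)
    (hρ1 : ∑ z, ρ z = 1) (h : IsMixing ρ ε) {x : Ω₁} (hx : 0 < fst ρ x) (A : Finset Ω₂) :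
    (∑ y ∈ A, snd ρ y - ε) * fst ρ x ≤ ∑ y ∈ A, ρ (x, y) := by
  have hA : ∑ y ∈ A, snd ρ y ≤ (∑ y ∈ A, ρ (x, y)) / fst ρ x + ε :=
    calc ∑ y ∈ A, snd ρ y = ∑ ξ, ∑ y ∈ A, ρ (ξ, y) := sum_comm
      _ ≤ ∑ ξ, fst ρ ξ * ((∑ y ∈ A, ρ (x, y)) / fst ρ x + ε) :=
          sum_le_sum fun ξ _ => h.sum_le_fst_mul hρ hx A ξ
      _ = (∑ y ∈ A, ρ (x, y)) / fst ρ x + ε := by rw [← sum_mul, sum_fst, hρ1, one_mul]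
  rw [← le_div_iff₀ hx]
  linarith

theorem mul_fst_le_fst {μ ν : Ω₁ × Ω₂ → ℝ} {ε : ℝ} (hμ : ∀ z, 0 ≤ μ z) (hν : ∀ z, 0 ≤ ν z)
    (hν1 : ∑ z, ν z = 1) (hε0 : 0 ≤ ε) (hε1 : ε ≤ 1) (hmix : IsMixing ν ε)
    (hTV : ∑ y, |snd ν y - snd μ y| ≤ ε * (2 * ε)) {D : Finset Ω₂}
    (hD : 1 - ε ≤ ∑ y ∈ D, snd ν y)
    (hDeq : ∀ y ∈ D, ∀ x, μ (x, y) / snd μ y = ν (x, y) / snd ν y)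
    {x : Ω₁} (hx : 0 < fst ν x) :
    (1 - 5 * ε) * fst ν x ≤ fst μ x := by
  classical
  set B := univ.filter fun y => ε * snd ν y < snd ν y - snd μ y
  set G := D \ B
  have hB : ∑ y ∈ B, snd ν y ≤ 2 * ε := sum_filter_lt_sub_le hε0 (by positivity) hTV
  have hG : 1 - 4 * ε ≤ ∑ y ∈ G, snd ν y - ε := by
    have hDB : ∑ y ∈ D ∩ B, snd ν y ≤ ∑ y ∈ B, snd ν y :=
      sum_le_sum_of_subset_of_nonneg inter_subset_right fun y _ _ => snd_nonneg hν y
    linarith [sum_inter_add_sum_sdiff D B fun y => snd ν y]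
  have hpt : ∀ y ∈ G, (1 - ε) * ν (x, y) ≤ μ (x, y) := fun y hy => by
    obtain ⟨hyD, hyB⟩ := mem_sdiff.mp hy
    simp only [B, mem_filter, mem_univ, true_and, not_lt] at hyB
    exact mul_le_of_div_eq_div (hμ _) (snd_nonneg hμ y) (hν _) (le_snd hν x y) (hDeq y hyD x)
      (by linarith)
  calc (1 - 5 * ε) * fst ν x
      ≤ (1 - ε) * ((∑ y ∈ G, snd ν y - ε) * fst ν x) := by
        nlinarith [mul_nonneg (mul_nonneg (sub_nonneg.mpr hε1) (sub_nonneg.mpr hG)) hx.le,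
          mul_nonneg (sq_nonneg ε) hx.le]
    _ ≤ (1 - ε) * ∑ y ∈ G, ν (x, y) :=
        mul_le_mul_of_nonneg_left (hmix.sub_mul_fst_le hν hν1 hx G) (by linarith)
    _ = ∑ y ∈ G, (1 - ε) * ν (x, y) := mul_sum _ _ _
    _ ≤ ∑ y ∈ G, μ (x, y) := sum_le_sum hpt
    _ ≤ fst μ x := sum_le_fst hμ x G

end

end ProductWeights

open ProductWeights in
theorem stmt4_general {Ω₁ Ω₂ : Type*} [Fintype Ω₁] [Fintype Ω₂]
    (μ ν : Ω₁ × Ω₂ → ℝ)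
    (hμ0 : ∀ z, 0 ≤ μ z) (hν0 : ∀ z, 0 ≤ ν z)
    (hμ1 : ∑ z, μ z = 1) (hν1 : ∑ z, ν z = 1)
    (ε₁ ε₂ ε₃ : ℝ)
    -- (1) mixing of μ and ν
    (h1 : ∀ ρ ∈ ({μ, ν} : Set (Ω₁ × Ω₂ → ℝ)), ∀ ξ ξ' : Ω₁,
      0 < ∑ y, ρ (ξ, y) → 0 < ∑ y, ρ (ξ', y) → ∀ A : Finset Ω₂,
        |(∑ y ∈ A, ρ (ξ, y)) / (∑ y, ρ (ξ, y))
            - (∑ y ∈ A, ρ (ξ', y)) / (∑ y, ρ (ξ', y))| ≤ ε₁)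
    -- (2) proximity of the second marginals in total variation
    (h2 : (∑ y, |(∑ x, μ (x, y)) - (∑ x, ν (x, y))|) / 2 ≤ ε₂)
    -- (3) conditional equality on an event D of large probability
    (h3 : ∃ D : Finset Ω₂,
      1 - ε₃ ≤ ∑ y ∈ D, ∑ x, μ (x, y) ∧
      1 - ε₃ ≤ ∑ y ∈ D, ∑ x, ν (x, y) ∧
      ∀ y ∈ D, ∀ x : Ω₁,
        μ (x, y) / (∑ x', μ (x', y)) = ν (x, y) / (∑ x', ν (x', y)))
    (ε : ℝ) (hε : ε = max ε₁ (max (Real.sqrt ε₂) ε₃)) (hε' : ε ≤ 0.1) :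
    ∀ x : Ω₁, 0 < ∑ y, ν (x, y) →
      1 - 9 * ε ≤ (∑ y, μ (x, y)) / (∑ y, ν (x, y)) ∧
        (∑ y, μ (x, y)) / (∑ y, ν (x, y)) ≤ 1 / (1 - 9 * ε) := by
  obtain ⟨D, hDμ, hDν, hDeq⟩ := h3
  change 1 - ε₃ ≤ ∑ y ∈ D, snd μ y at hDμ
  change 1 - ε₃ ≤ ∑ y ∈ D, snd ν y at hDν
  have hε₁ε : ε₁ ≤ ε := hε ▸ le_max_left _ _
  have hε₃ε : ε₃ ≤ ε := hε ▸ (le_max_right _ _).trans (le_max_right _ _)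
  obtain ⟨hε0, hε₂ε⟩ : 0 ≤ ε ∧ ε₂ ≤ ε ^ 2 :=
    Real.sqrt_le_iff.mp (hε ▸ (le_max_left _ _).trans (le_max_right _ _))
  have hmix : ∀ ρ ∈ ({μ, ν} : Set (Ω₁ × Ω₂ → ℝ)), IsMixing ρ ε :=
    fun ρ hρ ξ ξ' hξ hξ' A => (h1 ρ hρ ξ ξ' hξ hξ' A).trans hε₁ε
  have hTV : ∑ y, |snd μ y - snd ν y| ≤ ε * (2 * ε) := by
    change (∑ y, |snd μ y - snd ν y|) / 2 ≤ ε₂ at h2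
    linarith
  intro x hx
  change 0 < fst ν x at hx
  have hlow : (1 - 5 * ε) * fst ν x ≤ fst μ x :=
    mul_fst_le_fst hμ0 hν0 hν1 hε0 (by linarith) (hmix ν (by simp))
      ((sum_congr rfl fun y _ => abs_sub_comm _ _).trans_le hTV) (by linarith) hDeq hx
  have hμx : 0 < fst μ x := (mul_pos (by linarith) hx).trans_le hlow
  have hup : (1 - 5 * ε) * fst μ x ≤ fst ν x :=
    mul_fst_le_fst hν0 hμ0 hμ1 hε0 (by linarith) (hmix μ (by simp)) hTV (by linarith)
      (fun y hy x => (hDeq y hy x).symm) hμx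
  change 1 - 9 * ε ≤ fst μ x / fst ν x ∧ fst μ x / fst ν x ≤ 1 / (1 - 9 * ε)
  constructor
  · rw [le_div_iff₀ hx]
    nlinarith
  · rw [div_le_div_iff₀ hx (by linarith)]
    nlinarith

/-- **Conditional factorization to ratio mixing** (Alexander-type lemma).
`μ, ν` are probability weights on `Ω₁ × Ω₂`. Assume: (1) conditional mixing of both
measures with error `ε₁`; (2) the total variation distance of the second marginals is at
most `ε₂`; (3) on an event `D` of second-marginal probability `≥ 1 - ε₃` for both
measures, the conditional laws of the first coordinate given the second agree. Then,
with `ε = max(ε₁, √ε₂, ε₃) ≤ 0.1`, for every `x` with `ν₁(x) > 0` one has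
`1 - 9ε ≤ μ₁(x)/ν₁(x) ≤ 1/(1 - 9ε)`. -/
theorem stmt4 {Ω₁ Ω₂ : Type*} [Fintype Ω₁] [Fintype Ω₂]
    (μ ν : Ω₁ × Ω₂ → ℝ)
    (hμ0 : ∀ z, 0 ≤ μ z) (hν0 : ∀ z, 0 ≤ ν z)
    (hμ1 : ∑ z, μ z = 1) (hν1 : ∑ z, ν z = 1)
    (ε₁ ε₂ ε₃ : ℝ)
    (hε₁ : ε₁ ∈ Set.Ico (0:ℝ) 1) (hε₂ : ε₂ ∈ Set.Ico (0:ℝ) 1) (hε₃ : ε₃ ∈ Set.Ico (0:ℝ) 1)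
    -- (1) mixing of μ and ν
    (h1 : ∀ ρ ∈ ({μ, ν} : Set (Ω₁ × Ω₂ → ℝ)), ∀ ξ ξ' : Ω₁,
      0 < ∑ y, ρ (ξ, y) → 0 < ∑ y, ρ (ξ', y) → ∀ A : Finset Ω₂,
        |(∑ y ∈ A, ρ (ξ, y)) / (∑ y, ρ (ξ, y))
            - (∑ y ∈ A, ρ (ξ', y)) / (∑ y, ρ (ξ', y))| ≤ ε₁)
    -- (2) proximity of the second marginals in total variation
    (h2 : (∑ y, |(∑ x, μ (x, y)) - (∑ x, ν (x, y))|) / 2 ≤ ε₂)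
    -- (3) conditional equality on an event D of large probability
    (h3 : ∃ D : Finset Ω₂,
      1 - ε₃ ≤ ∑ y ∈ D, ∑ x, μ (x, y) ∧
      1 - ε₃ ≤ ∑ y ∈ D, ∑ x, ν (x, y) ∧
      ∀ y ∈ D, ∀ x : Ω₁,
        μ (x, y) / (∑ x', μ (x', y)) = ν (x, y) / (∑ x', ν (x', y)))
    (ε : ℝ) (hε : ε = max ε₁ (max (Real.sqrt ε₂) ε₃)) (hε' : ε ≤ 0.1) :
    ∀ x : Ω₁, 0 < ∑ y, ν (x, y) →
      1 - 9 * ε ≤ (∑ y, μ (x, y)) / (∑ y, ν (x, y)) ∧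
        (∑ y, μ (x, y)) / (∑ y, ν (x, y)) ≤ 1 / (1 - 9 * ε) :=
  stmt4_general μ ν hμ0 hν0 hμ1 hν1 ε₁ ε₂ ε₃ h1 h2 h3 ε hε hε'
end

section
/- In the patch exploration sampling setting, the inductively constructed random variable Y (defined by Y_{𝒱_k} = F^{Y_{𝒜_{k-1}}}_{𝒜_{k-1};𝒱_k}(U_k), where 𝒜_k = 𝒜_k(U_0,…,U_{k-1}) and 𝒱_k = 𝒜_k ∖ 𝒜_{k-1}) is well defined and has the same law as X. -/
/-!
Invariant: completing the configuration explored at time `k` by a sample of `X` conditioned on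
it reproduces the law of `X`:
`∑_B P(𝒜_k = B, Y_k = η on B) · P(X = η | X = η on B) = P(X = η)`.
It holds at `k = 0` because `𝒜_0 = ∅`. It is preserved by a step because `U_{k+1}` is uniform and
independent of `U_0, …, U_k`, which determine `𝒜_k`, `𝒜_{k+1}` and `Y_k`, so the new patch has the
conditional law of `X` given the explored one, and conditioning on `B` and then on `B' \ B` is
conditioning on `B'`. At time `T_*` everything is explored, so `P(Y = η) = P(X = η)` whenever the
right-hand side is positive, which suffices for two probability measures on a finite set.
-/

open MeasureTheory ProbabilityTheory
open scoped ENNReal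

noncomputable section

/-- The configuration `Y` built by the patch exploration after `k` steps: at step `k+1`
the coordinates in `𝒱_{k+1} = 𝒜_{k+1} ∖ 𝒜_k` are sampled using the sampling function
`F` applied to the uniform variable `u (k+1)`, conditionally on the already explored
configuration. -/
def patchY {I : Type*} [DecidableEq I] {𝒳 : I → Type*}
    (A : ℕ → (ℕ → ℝ) → Finset I)
    (F : Finset I → Finset I → (∀ x, 𝒳 x) → ℝ → ∀ x, 𝒳 x)
    (y₀ : ∀ x, 𝒳 x) (u : ℕ → ℝ) : ℕ → ∀ x, 𝒳 x
  | 0 => y₀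
  | k + 1 => fun x =>
      if x ∈ A (k + 1) u \ A k u then
        F (A k u) (A (k + 1) u \ A k u) (patchY A F y₀ u k) (u (k + 1)) x
      else patchY A F y₀ u k x

section MeasureLemmas

variable {α Ω : Type*} [MeasurableSpace α] [MeasurableSpace Ω]

lemma measure_eq_sum_inter_preimage_singleton {β : Type*} [Fintype β] [MeasurableSpace β]
    [MeasurableSingletonClass β] (μ : Measure α) {f : α → β} (hf : Measurable f) (s : Set α) :
    μ s = ∑ b, μ (s ∩ f ⁻¹' {b}) := by
  have hfib : ∀ b ∈ (Finset.univ : Finset β), MeasurableSet (f ⁻¹' {b}) :=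
    fun b _ => hf (measurableSet_singleton b)
  simp_rw [Set.inter_comm s, ← Measure.restrict_apply (hf (measurableSet_singleton _))]
  rw [sum_measure_preimage_singleton _ hfib, Finset.coe_univ, Set.preimage_univ,
    Measure.restrict_apply_univ]

lemma MeasureTheory.Measure.le_of_forall_measure_singleton_le [Finite α]
    [MeasurableSingletonClass α] {μ ν : Measure α} (h : ∀ a, μ {a} ≤ ν {a}) : μ ≤ ν := fun s => by
  rw [← s.toFinite.coe_toFinset, ← sum_measure_singleton, ← sum_measure_singleton]
  exact Finset.sum_le_sum fun a _ => h a

lemma MeasureTheory.Measure.ext_of_singleton_of_ne_zero [Finite α] [MeasurableSingletonClass α]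
    {μ ν : Measure α} [IsProbabilityMeasure μ] [IsProbabilityMeasure ν]
    (h : ∀ a, ν {a} ≠ 0 → μ {a} = ν {a}) : μ = ν := by
  refine (Measure.eq_of_le_of_isProbabilityMeasure <|
    Measure.le_of_forall_measure_singleton_le fun a => ?_).symm
  by_cases ha : ν {a} = 0
  · simp [ha]
  · exact (h a ha).ge

lemma ProbabilityTheory.cond_mul_cond_inter_of_subset (μ : Measure α) [IsFiniteMeasure μ]
    {s t u : Set α} (hs : MeasurableSet s) (ht : MeasurableSet t) (hut : u ⊆ t) :
    μ[t | s] * μ[u | s ∩ t] = μ[u | s] := by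
  rw [← cond_cond_eq_cond_inter hs ht, mul_comm, cond_mul_eq_inter ht, Set.inter_eq_right.mpr hut]

lemma ProbabilityTheory.iIndepFun.map_inter_eval_preimage_eq_mul_of_dependsOn {ι β : Type*}
    [MeasurableSpace β] [Nonempty β] {μ : Measure Ω} {U : ι → Ω → β} (hU : ∀ i, Measurable (U i))
    (hind : iIndepFun U μ) {S : Finset ι} {j : ι} (hj : j ∉ S) {e : Set (ι → β)}
    (he : MeasurableSet e) (hdep : DependsOn (· ∈ e) S) {T : Set β} (hT : MeasurableSet T) :
    μ.map (fun ω i => U i ω) (e ∩ (fun u => u j) ⁻¹' T)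
      = μ.map (fun ω i => U i ω) e * μ.map (U j) T := by
  classical
  have hUpi : Measurable fun ω i => U i ω := measurable_pi_lambda _ hU
  let extend : (S → β) → ι → β := fun v i => if h : i ∈ S then v ⟨i, h⟩ else Classical.arbitrary β
  have hextend : Measurable extend := by
    refine measurable_pi_lambda _ fun i => ?_
    by_cases h : i ∈ S
    · simpa [extend, h] using measurable_pi_apply (⟨i, h⟩ : S)
    · simp [extend, h]
  have he' : (fun ω i => U i ω) ⁻¹' e = (fun ω (i : S) => U i ω) ⁻¹' (extend ⁻¹' e) := by
    ext ω
    exact Iff.of_eq (hdep fun i hi => by simp [extend, Finset.mem_coe.mp hi])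
  rw [Measure.map_apply hUpi (he.inter (measurable_pi_apply j hT)), Measure.map_apply hUpi he,
    Measure.map_apply (hU j) hT, Set.preimage_inter, he']
  exact (hind.indepFun_finset S {j} (Finset.disjoint_singleton_right.mpr hj) hU
    ).measure_inter_preimage_eq_mul _ ((fun v => v ⟨j, Finset.mem_singleton_self j⟩) ⁻¹' T)
      (hextend he) (measurable_pi_apply _ hT)

end MeasureLemmas

section PatchExploration

variable {I : Type*} {𝒳 : I → Type*}

def agreeOn (B : Finset I) (η : ∀ x, 𝒳 x) : Set (∀ x, 𝒳 x) := {σ | ∀ x ∈ B, σ x = η x}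

def HasIndepUniformSteps (ρ : Measure (ℕ → ℝ)) : Prop :=
  ∀ k e S, MeasurableSet e → DependsOn (· ∈ e) (Set.Iic k) → MeasurableSet S →
    ρ (e ∩ (fun u => u (k + 1)) ⁻¹' S) = ρ e * volume.restrict (Set.Ico (0 : ℝ) 1) S

lemma hasIndepUniformSteps_map {Ω : Type*} [MeasurableSpace Ω] {μ : Measure Ω}
    {U : ℕ → Ω → ℝ} (hU : ∀ n, Measurable (U n)) (hind : iIndepFun U μ)
    (hlaw : ∀ n, μ.map (U n) = volume.restrict (Set.Ico (0 : ℝ) 1)) :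
    HasIndepUniformSteps (μ.map fun ω n => U n ω) := by
  intro k e S he hdep hS
  rw [← hlaw (k + 1)]
  exact hind.map_inter_eval_preimage_eq_mul_of_dependsOn hU (S := Finset.Iic k) (by simp) he
    (by rwa [Finset.coe_Iic]) hS

def SamplesConditionals [∀ x, MeasurableSpace (𝒳 x)] (ν : Measure (∀ x, 𝒳 x))
    (F : Finset I → Finset I → (∀ x, 𝒳 x) → ℝ → ∀ x, 𝒳 x) : Prop :=
  ∀ Λ J : Finset I, Disjoint Λ J → ∀ ξ, ν (agreeOn Λ ξ) ≠ 0 → ∀ η,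
    volume (Set.Ico (0 : ℝ) 1 ∩ F Λ J ξ ⁻¹' agreeOn J η) = ν[agreeOn J η | agreeOn Λ ξ]

lemma mem_agreeOn_self (B : Finset I) (η : ∀ x, 𝒳 x) : η ∈ agreeOn B η := fun _ _ => rfl

@[simp] lemma agreeOn_empty (η : ∀ x, 𝒳 x) : agreeOn ∅ η = Set.univ := by
  simp [agreeOn]

@[simp] lemma agreeOn_univ [Fintype I] (η : ∀ x, 𝒳 x) : agreeOn Finset.univ η = {η} := by
  ext σ
  simp [agreeOn, funext_iff]

lemma agreeOn_anti {B B' : Finset I} (h : B ⊆ B') (η : ∀ x, 𝒳 x) :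
    agreeOn B' η ⊆ agreeOn B η :=
  fun _ hσ x hx => hσ x (h hx)

variable [DecidableEq I]

lemma agreeOn_eq_inter_sdiff {B B' : Finset I} (h : B ⊆ B') (η : ∀ x, 𝒳 x) :
    agreeOn B' η = agreeOn B η ∩ agreeOn (B' \ B) η := by
  ext σ
  simp only [agreeOn, Set.mem_ofPred_eq, Set.mem_inter_iff, Finset.mem_sdiff]
  refine ⟨fun hσ => ⟨fun x hx => hσ x (h hx), fun x hx => hσ x hx.1⟩, fun ⟨hB, hB'⟩ x hx => ?_⟩
  by_cases hxB : x ∈ B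
  exacts [hB x hxB, hB' x ⟨hx, hxB⟩]

def patchStep (F : Finset I → Finset I → (∀ x, 𝒳 x) → ℝ → ∀ x, 𝒳 x) (B B' : Finset I)
    (ξ : ∀ x, 𝒳 x) (t : ℝ) : ∀ x, 𝒳 x :=
  fun x => if x ∈ B' \ B then F B (B' \ B) ξ t x else ξ x

variable (A : ℕ → (ℕ → ℝ) → Finset I) (F : Finset I → Finset I → (∀ x, 𝒳 x) → ℝ → ∀ x, 𝒳 x)
  (y₀ : ∀ x, 𝒳 x)

lemma patchY_succ (u : ℕ → ℝ) (k : ℕ) :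
    patchY A F y₀ u (k + 1) = patchStep F (A k u) (A (k + 1) u) (patchY A F y₀ u k) (u (k + 1)) :=
  rfl

variable {F} in
lemma patchStep_mem_agreeOn_iff {B B' : Finset I} (hBB' : B ⊆ B')
    (hF : ∀ ξ ξ' : ∀ x, 𝒳 x, (∀ x ∈ B, ξ x = ξ' x) → F B (B' \ B) ξ = F B (B' \ B) ξ')
    (ξ η : ∀ x, 𝒳 x) (t : ℝ) :
    patchStep F B B' ξ t ∈ agreeOn B' η ↔
      ξ ∈ agreeOn B η ∧ F B (B' \ B) η t ∈ agreeOn (B' \ B) η := by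
  have hB : patchStep F B B' ξ t ∈ agreeOn B η ↔ ξ ∈ agreeOn B η := by
    refine forall₂_congr fun x hx => ?_
    simp [patchStep, hx]
  have hB'B : patchStep F B B' ξ t ∈ agreeOn (B' \ B) η ↔
      F B (B' \ B) ξ t ∈ agreeOn (B' \ B) η := by
    refine forall₂_congr fun x hx => ?_
    simp [patchStep, hx]
  rw [agreeOn_eq_inter_sdiff hBB', Set.mem_inter_iff, hB, hB'B]
  exact and_congr_right fun hξ => by rw [hF ξ η hξ]

def exploredEvent (k : ℕ) (B : Finset I) (η : ∀ x, 𝒳 x) : Set (ℕ → ℝ) :=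
  {u | A k u = B ∧ patchY A F y₀ u k ∈ agreeOn B η}

variable {A F}

lemma exploredEvent_succ_inter (hAmono : ∀ k u, A k u ⊆ A (k + 1) u)
    (hF : ∀ Λ J ξ ξ', (∀ x ∈ Λ, ξ x = ξ' x) → F Λ J ξ = F Λ J ξ')
    (k : ℕ) (B B' : Finset I) (η : ∀ x, 𝒳 x) :
    exploredEvent A F y₀ (k + 1) B' η ∩ A k ⁻¹' {B}
      = exploredEvent A F y₀ k B η ∩ A (k + 1) ⁻¹' {B'}
        ∩ (fun u => u (k + 1)) ⁻¹' (F B (B' \ B) η ⁻¹' agreeOn (B' \ B) η) := by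
  ext u
  by_cases hB : A k u = B
  · by_cases hB' : A (k + 1) u = B'
    · subst hB hB'
      simp only [exploredEvent, patchY_succ, Set.mem_inter_iff, Set.mem_ofPred_eq,
        Set.mem_preimage, Set.mem_singleton_iff,
        patchStep_mem_agreeOn_iff (hAmono k u) (hF _ _), true_and, and_true]
    · simp [exploredEvent, hB, hB']
  · simp [exploredEvent, hB]

lemma measurable_patchStep [∀ x, MeasurableSpace (𝒳 x)] {B B' : Finset I} {ξ : ∀ x, 𝒳 x}
    (hF : Measurable (F B (B' \ B) ξ)) : Measurable (patchStep F B B' ξ) := by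
  refine measurable_pi_lambda _ fun x => ?_
  unfold patchStep
  split_ifs
  exacts [(measurable_pi_apply x).comp hF, measurable_const]

lemma sum_measure_exploredEvent_of_forall_eq [Fintype I] (ρ : Measure (ℕ → ℝ)) {k : ℕ}
    {C : Finset I} (hC : ∀ u, A k u = C) (η : ∀ x, 𝒳 x) (c : Finset I → ℝ≥0∞) :
    ∑ B, ρ (exploredEvent A F y₀ k B η) * c B
      = ρ ((fun u => patchY A F y₀ u k) ⁻¹' agreeOn C η) * c C := by
  rw [Finset.sum_eq_single C (fun B _ hB => ?_) (by simp)]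
  · simp [exploredEvent, hC, Set.preimage]
  · have : exploredEvent A F y₀ k B η = ∅ := by
      ext u
      simp [exploredEvent, hC, Ne.symm hB]
    simp [this]

lemma dependsOn_patchY (hA : ∀ k, DependsOn (A k) (Set.Iio k)) :
    ∀ k, DependsOn (fun u => patchY A F y₀ u k) (Set.Iic k)
  | 0 => fun _ _ _ => rfl
  | k + 1 => fun u u' h => by
    have hk : ∀ i ∈ Set.Iic k, u i = u' i := fun i hi => h i (Set.Iic_subset_Iic.2 k.le_succ hi)
    simp only [patchY_succ, dependsOn_patchY hA k hk, (hA k).mono Set.Iio_subset_Iic_self hk,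
      (hA (k + 1)).mono Set.Iio_subset_Iic_self h, h (k + 1) Set.self_mem_Iic]

lemma dependsOn_mem_exploredEvent_inter (hA : ∀ k, DependsOn (A k) (Set.Iio k)) (k : ℕ)
    (B B' : Finset I) (η : ∀ x, 𝒳 x) :
    DependsOn (· ∈ exploredEvent A F y₀ k B η ∩ A (k + 1) ⁻¹' {B'}) (Set.Iic k) := by
  intro u u' h
  have hk1 : A (k + 1) u = A (k + 1) u' := hA (k + 1) fun i hi => h i (Nat.le_of_lt_succ hi)
  simp only [exploredEvent, Set.mem_inter_iff, Set.mem_ofPred_eq, Set.mem_preimage,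
    dependsOn_patchY y₀ hA k h, (hA k).mono Set.Iio_subset_Iic_self h, hk1]

section Law

variable [Fintype I] [∀ x, Fintype (𝒳 x)] [∀ x, MeasurableSpace (𝒳 x)]
  [∀ x, DiscreteMeasurableSpace (𝒳 x)]

lemma measurable_patchY (hA : ∀ k, Measurable (A k)) (hF : ∀ Λ J ξ, Measurable (F Λ J ξ)) :
    ∀ k, Measurable (fun u => patchY A F y₀ u k)
  | 0 => measurable_const
  | k + 1 => by
    have hstep : Measurable fun p : (Finset I × Finset I × (∀ x, 𝒳 x)) × ℝ =>
        patchStep F p.1.1 p.1.2.1 p.1.2.2 p.2 :=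
      measurable_from_prod_countable_right fun p =>
        measurable_patchStep (B := p.1) (B' := p.2.1) (ξ := p.2.2) (hF _ _ _)
    have hprev : Measurable fun u : ℕ → ℝ => ((A k u, A (k + 1) u, patchY A F y₀ u k), u (k + 1)) :=
      ((hA k).prodMk ((hA (k + 1)).prodMk (measurable_patchY hA hF k))).prodMk
        (measurable_pi_apply (k + 1))
    exact hstep.comp hprev

lemma measurableSet_exploredEvent (hA : ∀ k, Measurable (A k))
    (hF : ∀ Λ J ξ, Measurable (F Λ J ξ)) (k : ℕ) (B : Finset I) (η : ∀ x, 𝒳 x) :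
    MeasurableSet (exploredEvent A F y₀ k B η) :=
  (hA k (measurableSet_singleton B)).inter
    (measurable_patchY y₀ hA hF k (MeasurableSet.of_discrete (s := agreeOn B η)))

lemma volume_preimage_agreeOn_mul_cond (ν : Measure (∀ x, 𝒳 x)) [IsFiniteMeasure ν]
    (hF : SamplesConditionals ν F) {B B' : Finset I} (hBB' : B ⊆ B') (η : ∀ x, 𝒳 x) :
    volume.restrict (Set.Ico (0 : ℝ) 1) (F B (B' \ B) η ⁻¹' agreeOn (B' \ B) η)
      * ν[{η} | agreeOn B' η] = ν[{η} | agreeOn B η] := by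
  by_cases h0 : ν (agreeOn B η) = 0
  · have h0' : ν (agreeOn B' η) = 0 := measure_mono_null (agreeOn_anti hBB' η) h0
    simp [cond_eq_zero_of_meas_eq_zero, h0, h0']
  · rw [Measure.restrict_apply' measurableSet_Ico, Set.inter_comm,
      hF B (B' \ B) Finset.disjoint_sdiff η h0 η, agreeOn_eq_inter_sdiff hBB']
    exact cond_mul_cond_inter_of_subset ν .of_discrete .of_discrete
      (Set.singleton_subset_iff.2 (mem_agreeOn_self _ η))

variable (ρ : Measure (ℕ → ℝ))

lemma measure_exploredEvent_succ
    (hρ : HasIndepUniformSteps ρ) (hAmono : ∀ k u, A k u ⊆ A (k + 1) u)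
    (hAdep : ∀ k, DependsOn (A k) (Set.Iio k)) (hA : ∀ k, Measurable (A k))
    (hFmeas : ∀ Λ J ξ, Measurable (F Λ J ξ))
    (hF : ∀ Λ J ξ ξ', (∀ x ∈ Λ, ξ x = ξ' x) → F Λ J ξ = F Λ J ξ')
    (k : ℕ) (B' : Finset I) (η : ∀ x, 𝒳 x) :
    ρ (exploredEvent A F y₀ (k + 1) B' η)
      = ∑ B, ρ (exploredEvent A F y₀ k B η ∩ A (k + 1) ⁻¹' {B'})
        * volume.restrict (Set.Ico (0 : ℝ) 1) (F B (B' \ B) η ⁻¹' agreeOn (B' \ B) η) := by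
  rw [measure_eq_sum_inter_preimage_singleton ρ (hA k)]
  refine Finset.sum_congr rfl fun B _ => ?_
  rw [exploredEvent_succ_inter y₀ hAmono hF]
  exact hρ k _ _ ((measurableSet_exploredEvent y₀ hA hFmeas k B η).inter (hA _ (.singleton B')))
    (dependsOn_mem_exploredEvent_inter y₀ hAdep k B B' η) (hFmeas _ _ _ .of_discrete)

variable [IsProbabilityMeasure ρ] (ν : Measure (∀ x, 𝒳 x)) [IsProbabilityMeasure ν]

lemma sum_measure_exploredEvent_mul_cond
    (hρ : HasIndepUniformSteps ρ) (hA0 : ∀ u, A 0 u = ∅) (hAmono : ∀ k u, A k u ⊆ A (k + 1) u)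
    (hAdep : ∀ k, DependsOn (A k) (Set.Iio k)) (hA : ∀ k, Measurable (A k))
    (hFmeas : ∀ Λ J ξ, Measurable (F Λ J ξ))
    (hF : ∀ Λ J ξ ξ', (∀ x ∈ Λ, ξ x = ξ' x) → F Λ J ξ = F Λ J ξ')
    (hFν : SamplesConditionals ν F) (η : ∀ x, 𝒳 x) :
    ∀ k, ∑ B, ρ (exploredEvent A F y₀ k B η) * ν[{η} | agreeOn B η] = ν {η}
  | 0 => by simp [sum_measure_exploredEvent_of_forall_eq y₀ ρ hA0]
  | k + 1 => by
    have hstep : ∀ B B', ρ (exploredEvent A F y₀ k B η ∩ A (k + 1) ⁻¹' {B'})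
        * volume.restrict (Set.Ico (0 : ℝ) 1) (F B (B' \ B) η ⁻¹' agreeOn (B' \ B) η)
        * ν[{η} | agreeOn B' η]
        = ρ (exploredEvent A F y₀ k B η ∩ A (k + 1) ⁻¹' {B'}) * ν[{η} | agreeOn B η] := by
      intro B B'
      by_cases hBB' : B ⊆ B'
      · rw [mul_assoc, volume_preimage_agreeOn_mul_cond ν hFν hBB']
      · have hempty : exploredEvent A F y₀ k B η ∩ A (k + 1) ⁻¹' {B'} = ∅ := by
          ext u
          simp only [exploredEvent, Set.mem_inter_iff, Set.mem_ofPred_eq, Set.mem_preimage,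
            Set.mem_singleton_iff, Set.mem_empty_iff_false, iff_false]
          rintro ⟨⟨rfl, -⟩, rfl⟩
          exact hBB' (hAmono k u)
        simp [hempty]
    calc ∑ B', ρ (exploredEvent A F y₀ (k + 1) B' η) * ν[{η} | agreeOn B' η]
        = ∑ B', ∑ B, ρ (exploredEvent A F y₀ k B η ∩ A (k + 1) ⁻¹' {B'})
            * ν[{η} | agreeOn B η] := by
          simp_rw [measure_exploredEvent_succ y₀ ρ hρ hAmono hAdep hA hFmeas hF, Finset.sum_mul,
            hstep]
      _ = ∑ B, ρ (exploredEvent A F y₀ k B η) * ν[{η} | agreeOn B η] := by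
          rw [Finset.sum_comm]
          simp_rw [← Finset.sum_mul, ← measure_eq_sum_inter_preimage_singleton ρ (hA (k + 1))]
      _ = ν {η} := sum_measure_exploredEvent_mul_cond hρ hA0 hAmono hAdep hA hFmeas hF hFν η k

lemma map_patchY_apply_singleton
    (hρ : HasIndepUniformSteps ρ) (hA0 : ∀ u, A 0 u = ∅) (hAmono : ∀ k u, A k u ⊆ A (k + 1) u)
    (hAdep : ∀ k, DependsOn (A k) (Set.Iio k)) (hA : ∀ k, Measurable (A k))
    {T : ℕ} (hT : ∀ u, A T u = Finset.univ)
    (hFmeas : ∀ Λ J ξ, Measurable (F Λ J ξ))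
    (hF : ∀ Λ J ξ ξ', (∀ x ∈ Λ, ξ x = ξ' x) → F Λ J ξ = F Λ J ξ')
    (hFν : SamplesConditionals ν F) {η : ∀ x, 𝒳 x} (hη : ν {η} ≠ 0) :
    ρ.map (fun u => patchY A F y₀ u T) {η} = ν {η} := by
  have h := sum_measure_exploredEvent_mul_cond y₀ ρ ν hρ hA0 hAmono hAdep hA hFmeas hF hFν η T
  rwa [sum_measure_exploredEvent_of_forall_eq y₀ ρ hT, agreeOn_univ,
    cond_apply_self hη (measure_ne_top _ _), mul_one,
    ← Measure.map_apply (measurable_patchY y₀ hA hFmeas T) (.singleton η)] at h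

end Law

end PatchExploration

/-- **Patch exploration sampling produces the correct law.**
In the patch exploration setting (finite index set `I`, finite spin spaces `𝒳 x`, a
random variable `X` with values in `∏ x, 𝒳 x`, i.i.d. uniform variables `U_k` on `[0,1)`,
increasing exploration sets `𝒜_k` depending only on `U_0, …, U_{k-1}` and stabilising to
`I` by time `T_*`, and sampling functions `F` realising the conditional laws of `X`), the
inductively constructed random variable `Y` is well defined and has the same law as `X`. -/
theorem stmt6 {I : Type*} [Fintype I] [DecidableEq I]
    {𝒳 : I → Type*} [∀ x, Fintype (𝒳 x)] [∀ x, MeasurableSpace (𝒳 x)]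
    [∀ x, DiscreteMeasurableSpace (𝒳 x)]
    {Ω : Type*} [MeasurableSpace Ω] (μ : Measure Ω) [IsProbabilityMeasure μ]
    -- the random variable X
    (X : Ω → ∀ x, 𝒳 x) (hX : Measurable X)
    -- the i.i.d. uniform variables on [0,1)
    (U : ℕ → Ω → ℝ) (hUmeas : ∀ n, Measurable (U n))
    (hUindep : iIndepFun U μ)
    (hUlaw : ∀ n, μ.map (U n) = volume.restrict (Set.Ico (0:ℝ) 1))
    -- the exploration sets 𝒜_k
    (A : ℕ → (ℕ → ℝ) → Finset I)
    (hA0 : ∀ u, A 0 u = ∅)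
    (hAmono : ∀ k u, A k u ⊆ A (k + 1) u)
    (hAprefix : ∀ k u u', (∀ i < k, u i = u' i) → A k u = A k u')
    (hAmeas : ∀ k (J : Finset I), MeasurableSet {u : ℕ → ℝ | A k u = J})
    (Tstar : ℕ) (hT : ∀ k u, Tstar ≤ k → A k u = Finset.univ)
    -- the sampling functions F
    (F : Finset I → Finset I → (∀ x, 𝒳 x) → ℝ → ∀ x, 𝒳 x)
    (hFmeas : ∀ Λ J ξ, Measurable (F Λ J ξ))
    (hFrestrict : ∀ Λ J ξ ξ', (∀ x ∈ Λ, ξ x = ξ' x) → F Λ J ξ = F Λ J ξ')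
    (hFlaw : ∀ (Λ J : Finset I), Disjoint Λ J → ∀ ξ : ∀ x, 𝒳 x,
      μ.map X {σ | ∀ x ∈ Λ, σ x = ξ x} ≠ 0 →
      ∀ η : ∀ x, 𝒳 x,
        volume {u ∈ Set.Ico (0:ℝ) 1 | ∀ x ∈ J, F Λ J ξ u x = η x}
          = (μ.map X)[|{σ | ∀ x ∈ Λ, σ x = ξ x}] {σ | ∀ x ∈ J, σ x = η x})
    -- an arbitrary initial configuration (irrelevant since 𝒜_0 = ∅)
    (y₀ : ∀ x, 𝒳 x) :
    μ.map (fun ω => patchY A F y₀ (fun n => U n ω) Tstar) = μ.map X := by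
  have hπ : Measurable fun ω n => U n ω := measurable_pi_lambda _ hUmeas
  have hA : ∀ k, Measurable (A k) := fun k => measurable_to_countable' (hAmeas k)
  have hYT := measurable_patchY y₀ hA hFmeas Tstar
  have : IsProbabilityMeasure (μ.map X) := Measure.isProbabilityMeasure_map hX.aemeasurable
  have : IsProbabilityMeasure (μ.map fun ω n => U n ω) :=
    Measure.isProbabilityMeasure_map hπ.aemeasurable
  have hρ := hasIndepUniformSteps_map hUmeas hUindep hUlaw
  change μ.map ((fun u => patchY A F y₀ u Tstar) ∘ fun ω n => U n ω) = _
  rw [← Measure.map_map hYT hπ]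
  have : IsProbabilityMeasure ((μ.map fun ω n => U n ω).map fun u => patchY A F y₀ u Tstar) :=
    Measure.isProbabilityMeasure_map hYT.aemeasurable
  exact Measure.ext_of_singleton_of_ne_zero fun η hη =>
    map_patchY_apply_singleton y₀ _ _ hρ hA0 hAmono (fun k _ _ h => hAprefix k _ _ h) hA
      (hT Tstar · le_rfl) hFmeas hFrestrict hFlaw hη

end
end

section
/- Let ε_i > 0, i ∈ I a finite index family, and let events A_i satisfy P(A_i) ≥ 1 − ε_i under each of two probability measures P ∈ {μ, ν}. Suppose μ and ν satisfy conditions (1)–(3) of the conditional-factorization-to-ratio-mixing lemma with parameters ε_1 = ε_2 = ε_3 = Cnm e^{−ck} for constants C ≥ 0, c > 0 and integers n, m, k with k ≥ C'ln(nm). Then for any configuration ω on the inner block Δ with μ(X_Δ = ω) > 0, the ratio ν'(X_Δ = ω)/μ(X_Δ = ω) ≥ 1 − C''nm e^{−c''k} for the conditioned measure ν', with constants C'', c'' depending only on C, c, C'. -/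
/-!
Let `μ₁, μ₂` and `ν₁, ν₂` be the marginals, `ε = C n m e^{-ck}` and `δ = e^{-ck/2}`, and let
`G ⊆ D` be the set of `y` with `ν₂(y) ≥ (1 - δ) μ₂(y)`. On `G` the conditional laws of the first
coordinate agree, so `ν(x, y) ≥ (1 - δ) μ(x, y)` there and `ν₁(x) ≥ (1 - δ) μ(x, G)`.
Averaging the mixing bound over the starting point shows that `μ(x, G)/μ₁(x)` is at least
`μ₂(G) - ε`, and Markov's inequality for the total variation distance bounds the `μ₂`-mass of
`D \ G` by `2ε/δ`. Hence `ν₁(x)/μ₁(x) ≥ (1 - δ)(1 - 2ε - 2ε/δ) ≥ 1 - δ - 2ε - 2ε/δ`, and the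
choice of `δ` balances `δ` against `ε/δ = C n m e^{-ck/2}`.
-/

open Finset Real

section RatioBound

variable {α β : Type*} [Fintype α] [Fintype β]

theorem mul_sum_filter_lt_le_sum_abs_sub (s : Finset β) (f g : β → ℝ) (δ : ℝ) :
    δ * ∑ y ∈ s with g y < (1 - δ) * f y, f y ≤ ∑ y, |f y - g y| :=
  calc δ * ∑ y ∈ s with g y < (1 - δ) * f y, f y
      = ∑ y ∈ s with g y < (1 - δ) * f y, δ * f y := mul_sum _ _ _
    _ ≤ ∑ y ∈ s with g y < (1 - δ) * f y, |f y - g y| := by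
      refine sum_le_sum fun y hy => ?_
      linarith [(mem_filter.mp hy).2, le_abs_self (f y - g y)]
    _ ≤ ∑ y, |f y - g y| :=
      sum_le_sum_of_subset_of_nonneg (subset_univ _) fun _ _ _ => abs_nonneg _

theorem sum_sum_le_of_forall_div_le {μ : α × β → ℝ} (hμ : ∀ z, 0 ≤ μ z) (hμ1 : ∑ z, μ z = 1)
    (B : Finset β) {q : ℝ}
    (h : ∀ ξ, 0 < ∑ y, μ (ξ, y) → (∑ y ∈ B, μ (ξ, y)) / ∑ y, μ (ξ, y) ≤ q) :
    ∑ y ∈ B, ∑ ξ, μ (ξ, y) ≤ q := by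
  have hrow : ∀ ξ, ∑ y ∈ B, μ (ξ, y) ≤ (∑ y, μ (ξ, y)) * q := by
    intro ξ
    have hsub : ∑ y ∈ B, μ (ξ, y) ≤ ∑ y, μ (ξ, y) :=
      sum_le_sum_of_subset_of_nonneg (subset_univ B) fun _ _ _ => hμ _
    have hrow_nonneg : 0 ≤ ∑ y, μ (ξ, y) := sum_nonneg fun _ _ => hμ _
    rcases hrow_nonneg.eq_or_lt with hξ | hξ
    · rw [← hξ, zero_mul]
      exact hsub.trans hξ.ge
    · exact (div_le_iff₀' hξ).mp (h ξ hξ)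
  calc ∑ y ∈ B, ∑ ξ, μ (ξ, y) = ∑ ξ, ∑ y ∈ B, μ (ξ, y) := sum_comm
    _ ≤ ∑ ξ, (∑ y, μ (ξ, y)) * q := sum_le_sum fun ξ _ => hrow ξ
    _ = q := by rw [← sum_mul, ← Fintype.sum_prod_type', hμ1, one_mul]

theorem mul_le_of_div_eq_div {a A b B r : ℝ} (ha : 0 ≤ a) (haA : a ≤ A) (hb : 0 ≤ b)
    (hB : 0 ≤ B) (h : a / A = b / B) (hr : r * A ≤ B) : r * a ≤ b := by
  rcases (ha.trans haA).eq_or_lt with hA | hA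
  · simp [le_antisymm (hA ▸ haA) ha, hb]
  rcases hB.eq_or_lt with hB0 | hB0
  · subst hB0
    nlinarith
  rw [div_eq_div_iff hA.ne' hB0.ne'] at h
  nlinarith

theorem one_sub_le_div_of_cond_eq {μ ν : α × β → ℝ} (hμ : ∀ z, 0 ≤ μ z) (hν : ∀ z, 0 ≤ ν z)
    (hμ1 : ∑ z, μ z = 1) {ε δ : ℝ} (hδ0 : 0 < δ) (hδ1 : δ ≤ 1)
    (hmix : ∀ ξ ξ' : α, 0 < ∑ y, μ (ξ, y) → 0 < ∑ y, μ (ξ', y) → ∀ B : Finset β,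
      |(∑ y ∈ B, μ (ξ, y)) / (∑ y, μ (ξ, y)) - (∑ y ∈ B, μ (ξ', y)) / (∑ y, μ (ξ', y))| ≤ ε)
    (htv : (∑ y, |(∑ x, μ (x, y)) - (∑ x, ν (x, y))|) / 2 ≤ ε)
    (D : Finset β) (hD : 1 - ε ≤ ∑ y ∈ D, ∑ x, μ (x, y))
    (hcond : ∀ y ∈ D, ∀ x : α, μ (x, y) / (∑ x', μ (x', y)) = ν (x, y) / (∑ x', ν (x', y)))
    {x : α} (hx : 0 < ∑ y, μ (x, y)) :
    1 - (δ + 2 * ε + 2 * ε / δ) ≤ (∑ y, ν (x, y)) / ∑ y, μ (x, y) := by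
  set μ₂ : β → ℝ := fun y => ∑ x', μ (x', y)
  set ν₂ : β → ℝ := fun y => ∑ x', ν (x', y)
  set G := {y ∈ D | ¬ ν₂ y < (1 - δ) * μ₂ y}
  set T := ∑ y, μ (x, y)
  set S := ∑ y ∈ G, μ (x, y)
  have hε : 0 ≤ ε := by linarith [sum_nonneg fun y (_ : y ∈ univ) => abs_nonneg (μ₂ y - ν₂ y)]
  have hν₁ : (1 - δ) * S ≤ ∑ y, ν (x, y) :=
    calc (1 - δ) * S = ∑ y ∈ G, (1 - δ) * μ (x, y) := mul_sum _ _ _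
      _ ≤ ∑ y ∈ G, ν (x, y) := by
        refine sum_le_sum fun y hy => ?_
        obtain ⟨hyD, hy⟩ := mem_filter.mp hy
        exact mul_le_of_div_eq_div (hμ _) (single_le_sum (fun ξ _ => hμ (ξ, y)) (mem_univ x))
          (hν _) (sum_nonneg fun _ _ => hν _) (hcond y hyD x) (not_lt.mp hy)
      _ ≤ ∑ y, ν (x, y) := sum_le_sum_of_subset_of_nonneg (subset_univ G) fun _ _ _ => hν _
  have hG : 1 - ε - 2 * ε / δ ≤ ∑ y ∈ G, μ₂ y := by
    have hbad := mul_sum_filter_lt_le_sum_abs_sub D μ₂ ν₂ δ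
    have hbad' : ∑ y ∈ D with ν₂ y < (1 - δ) * μ₂ y, μ₂ y ≤ 2 * ε / δ := by
      rw [le_div_iff₀' hδ0]
      linarith
    linarith [sum_filter_add_sum_filter_not D (fun y => ν₂ y < (1 - δ) * μ₂ y) μ₂]
  have hmixG : ∑ y ∈ G, μ₂ y ≤ S / T + ε :=
    sum_sum_le_of_forall_div_le hμ hμ1 G fun ξ hξ => by
      linarith [(abs_le.mp (hmix ξ x hξ hx G)).2]
  rw [le_div_iff₀ hx]
  have hST : (1 - 2 * ε - 2 * ε / δ) * T ≤ S := by
    rw [← le_div_iff₀ hx]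
    linarith
  have hδη : 0 ≤ δ * (2 * ε + 2 * ε / δ) := by positivity
  calc (1 - (δ + 2 * ε + 2 * ε / δ)) * T ≤ (1 - δ) * ((1 - 2 * ε - 2 * ε / δ) * T) := by
        nlinarith
    _ ≤ (1 - δ) * S := mul_le_mul_of_nonneg_left hST (by linarith)
    _ ≤ ∑ y, ν (x, y) := hν₁

end RatioBound

theorem exp_neg_mul_le_one {c k : ℝ} (hc : 0 ≤ c) (hk : 0 ≤ k) : exp (-c * k) ≤ 1 :=
  exp_le_one_iff.mpr (by rw [neg_mul, neg_nonpos]; positivity)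

theorem exp_half_add_two_mul_add_two_mul_div_exp_half_le {C c n m k : ℝ} (hC : 0 ≤ C)
    (hc : 0 ≤ c) (hnm : 1 ≤ n * m) (hk : 0 ≤ k) :
    exp (-(c / 2) * k) + 2 * (C * n * m * exp (-c * k))
        + 2 * (C * n * m * exp (-c * k)) / exp (-(c / 2) * k)
      ≤ (4 * C + 1) * n * m * exp (-(c / 2) * k) := by
  set δ := exp (-(c / 2) * k)
  have hδ0 : 0 < δ := exp_pos _
  have hδ1 : δ ≤ 1 := exp_neg_mul_le_one (by positivity) hk
  have hsq : exp (-c * k) = δ * δ := by rw [← exp_add]; ring_nf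
  rw [hsq, show 2 * (C * n * m * (δ * δ)) / δ = 2 * C * (n * m) * δ by field_simp]
  have hCnm : 0 ≤ C * (n * m) := by positivity
  nlinarith [mul_le_mul_of_nonneg_left hδ1 (mul_nonneg hCnm hδ0.le)]

/-- **From weak mixing estimates to a ratio bound via conditional factorization.**
Suppose each of finitely many events `A i` has probability at least `1 - εI i` under both
`μ` and `ν`, and that `μ, ν` (probability weights on `Ω₁ × Ω₂`) satisfy conditions
(1)–(3) of the conditional-factorization-to-ratio-mixing lemma with parameters
`ε₁ = ε₂ = ε₃ = C n m e^{-c k}`, for integers `n, m ≥ 1` and `k ≥ C' ln(n m)`. Then, for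
suitable constants `C'', c''` depending only on `C, c, C'`, for every `x ∈ Ω₁` with
`μ₁(x) > 0`, the ratio of the first marginals satisfies
`ν₁(x)/μ₁(x) ≥ 1 - C'' n m e^{-c'' k}`. -/
theorem stmt13 (C c C' : ℝ) (hC : 0 ≤ C) (hc : 0 < c) :
    ∃ C'' c'' : ℝ, 0 ≤ C'' ∧ 0 < c'' ∧
      ∀ (n m k : ℕ), 1 ≤ n → 1 ≤ m → C' * Real.log ((n : ℝ) * m) ≤ (k : ℝ) →
      ∀ (Ω₁ Ω₂ : Type) [Fintype Ω₁] [Fintype Ω₂],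
      ∀ (μ ν : Ω₁ × Ω₂ → ℝ),
        (∀ z, 0 ≤ μ z) → (∀ z, 0 ≤ ν z) →
        (∑ z, μ z = 1) → (∑ z, ν z = 1) →
        -- the auxiliary events A i of large probability under both measures
        ∀ (ι : Type) (s : Finset ι) (εI : ι → ℝ) (Aev : ι → Finset (Ω₁ × Ω₂)),
          (∀ i ∈ s, 0 < εI i) →
          (∀ i ∈ s, 1 - εI i ≤ ∑ z ∈ Aev i, μ z ∧ 1 - εI i ≤ ∑ z ∈ Aev i, ν z) →
        -- (1) mixing of μ and ν with error ε₁ = C n m e^{-c k}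
        (∀ ρ ∈ ({μ, ν} : Set (Ω₁ × Ω₂ → ℝ)), ∀ ξ ξ' : Ω₁,
          0 < ∑ y, ρ (ξ, y) → 0 < ∑ y, ρ (ξ', y) → ∀ B : Finset Ω₂,
            |(∑ y ∈ B, ρ (ξ, y)) / (∑ y, ρ (ξ, y))
                - (∑ y ∈ B, ρ (ξ', y)) / (∑ y, ρ (ξ', y))|
              ≤ C * n * m * Real.exp (-c * k)) →
        -- (2) total variation proximity of the second marginals, ε₂ = C n m e^{-c k}
        ((∑ y, |(∑ x, μ (x, y)) - (∑ x, ν (x, y))|) / 2 ≤ C * n * m * Real.exp (-c * k)) →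
        -- (3) conditional equality on an event D, ε₃ = C n m e^{-c k}
        (∃ D : Finset Ω₂,
          1 - C * n * m * Real.exp (-c * k) ≤ ∑ y ∈ D, ∑ x, μ (x, y) ∧
          1 - C * n * m * Real.exp (-c * k) ≤ ∑ y ∈ D, ∑ x, ν (x, y) ∧
          ∀ y ∈ D, ∀ x : Ω₁,
            μ (x, y) / (∑ x', μ (x', y)) = ν (x, y) / (∑ x', ν (x', y))) →
        ∀ x : Ω₁, 0 < ∑ y, μ (x, y) →
          1 - C'' * n * m * Real.exp (-c'' * k)
            ≤ (∑ y, ν (x, y)) / (∑ y, μ (x, y)) := by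
  refine ⟨4 * C + 1, c / 2, by positivity, by positivity, ?_⟩
  intro n m k hn hm _ Ω₁ Ω₂ _ _ μ ν hμ hν hμ1 _ ι s εI Aev _ _ hmix htv ⟨D, hD, _, hcond⟩ x hx
  have hnm : (1 : ℝ) ≤ n * m :=
    one_le_mul_of_one_le_of_one_le (by exact_mod_cast hn) (by exact_mod_cast hm)
  have hratio := one_sub_le_div_of_cond_eq hμ hν hμ1 (exp_pos _)
    (exp_neg_mul_le_one (c := c / 2) (by positivity) k.cast_nonneg) (hmix μ (Set.mem_insert _ _))
    htv D hD hcond hx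
  linarith [exp_half_add_two_mul_add_two_mul_div_exp_half_le hC hc.le hnm k.cast_nonneg]
end
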